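/- Work in R = ℂ[x₀, x₁, x₂, x₃]. Let α₀, α₁, α₂, α₃ ∈ R be homogeneous of degree 3, satisfying the Euler condition Σ_{i=0}^{3} xᵢαᵢ = 0 and the integrability condition (α ∧ dα = 0): for every i, Σ_{j,k,l} ε(i,j,k,l)·αⱼ·(∂ₖα_l) = 0, where ε(i,j,k,l) is the sign of (i,j,k,l) as a permutation of (0,1,2,3) and zero if two indices coincide. Define π i j = Σ_{k,l} ε(i,j,k,l)·(∂ₖα_l). Then π is antisymmetric, the bracket {f, g} = Σ_{i,j} π i j · ∂ᵢf · ∂ⱼg satisfies the Jacobi identity {f,{g,h}} + {g,{h,f}} + {h,{f,g}} = 0 for all f, g, h ∈ R, and π is unimodular: Σ_j ∂ⱼ(π i j) = 0 for every i. -/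

import Mathlib

open MvPolynomial

noncomputable section

/-- The Levi-Civita symbol `ε(i,j,k,l)` on `Fin 4`: the sign of `(i,j,k,l)` as a permutation
of `(0,1,2,3)`, and `0` if two indices coincide. -/
def eps (i j k l : Fin 4) : ℤ :=
  if h : Function.Bijective ![i, j, k, l] then
    (Equiv.Perm.sign (Equiv.ofBijective _ h) : ℤ)
  else 0

/-- The bracket `{f,g} = Σ_{i,j} π i j · ∂ᵢf · ∂ⱼg` determined by a matrix of polynomials. -/
def brkt (π : Fin 4 → Fin 4 → MvPolynomial (Fin 4) ℂ)
    (f g : MvPolynomial (Fin 4) ℂ) : MvPolynomial (Fin 4) ℂ :=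
  ∑ i : Fin 4, ∑ j : Fin 4, π i j * pderiv i f * pderiv j g

/-!
`π` is the Hodge dual of `dα`, so it is antisymmetric, and it is divergence free because mixed
partial derivatives commute. The Jacobiator of the antisymmetric biderivation `{·,·}` is a
derivation in each argument, so it vanishes as soon as it vanishes on coordinate functions, where
it equals `Σⱼ π a j ∂ⱼ(π b c) + (cyclic)`. For `π = *dα` twice this coefficient is
`Σ_d ε(a,b,c,d) ∂_d` of the coefficient of `dα ∧ dα = d(α ∧ dα)`, which vanishes by integrability.
-/

theorem eps_eq_sign_prod (i j k l : Fin 4) :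
    eps i j k l = ((j : ℤ) - i).sign * ((k : ℤ) - i).sign * ((l : ℤ) - i).sign *
      ((k : ℤ) - j).sign * ((l : ℤ) - j).sign * ((l : ℤ) - k).sign := by
  revert i j k l; decide

theorem eps_swap_left (i j k l : Fin 4) : eps j i k l = -eps i j k l := by
  revert i j k l; decide

theorem eps_swap_mid (i j k l : Fin 4) : eps i k j l = -eps i j k l := by
  revert i j k l; decide

theorem eps_swap_first_third (i j k l : Fin 4) : eps k j i l = -eps i j k l := by
  revert i j k l; decide

theorem MvPolynomial.pderiv_pderiv_comm {σ R : Type*} [CommSemiring R] (i j : σ)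
    (f : MvPolynomial σ R) : pderiv i (pderiv j f) = pderiv j (pderiv i f) := by
  classical
  induction f using MvPolynomial.induction_on' with
  | add p q hp hq => simp only [map_add, hp, hq]
  | monomial s a =>
    rcases eq_or_ne i j with rfl | hij
    · rfl
    · simp only [pderiv_monomial, tsub_right_comm, Finsupp.tsub_apply, Finsupp.single_apply,
        if_neg hij, if_neg hij.symm, tsub_zero]
      congr 1
      ring

theorem Finset.sum_sum_eq_zero_of_antisymm {ι M : Type*} [Fintype ι] [AddCommGroup M]
    [IsAddTorsionFree M] (T : ι → ι → M) (hT : ∀ j k, T k j = -T j k) :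
    ∑ j, ∑ k, T j k = 0 := by
  refine self_eq_neg.mp ?_
  conv_lhs => rw [Finset.sum_comm]
  rw [← Finset.sum_neg_distrib]
  exact Finset.sum_congr rfl fun j _ => by
    rw [← Finset.sum_neg_distrib]; exact Finset.sum_congr rfl fun k _ => hT j k

theorem eq_zero_of_alternating {ι M : Type*} [LinearOrder ι] [AddGroup M] [IsAddTorsionFree M]
    {J : ι → ι → ι → M} (h₁₂ : ∀ a b c, J b a c = -J a b c) (h₂₃ : ∀ a b c, J a c b = -J a b c)
    (hlt : ∀ a b c, a < b → b < c → J a b c = 0) (a b c : ι) : J a b c = 0 := by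
  have of_lt : ∀ a b c, a < b → J a b c = 0 := by
    intro a b c hab
    rcases lt_trichotomy b c with hbc | rfl | hcb
    · exact hlt a b c hab hbc
    · exact self_eq_neg.mp (h₂₃ a b b)
    rw [h₂₃, neg_eq_zero]
    rcases lt_trichotomy a c with hac | rfl | hca
    · exact hlt a c b hac hcb
    · exact self_eq_neg.mp (h₁₂ a a b)
    · rw [← neg_eq_zero, ← h₁₂]; exact hlt c a b hca hab
  rcases lt_trichotomy a b with hab | rfl | hba
  · exact of_lt a b c hab
  · exact self_eq_neg.mp (h₁₂ a a c)
  · rw [← neg_eq_zero, ← h₁₂]; exact of_lt b a c hba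

section Coordinates

variable {R : Type*} [CommRing R]

def dualCurl (α : Fin 4 → MvPolynomial (Fin 4) R) (i j : Fin 4) : MvPolynomial (Fin 4) R :=
  ∑ k, ∑ l, eps i j k l • pderiv k (α l)

/-- The components of `*(α ∧ dα)`. -/
def integrabilityForm (α : Fin 4 → MvPolynomial (Fin 4) R) (i : Fin 4) : MvPolynomial (Fin 4) R :=
  ∑ j, ∑ k, ∑ l, eps i j k l • (α j * pderiv k (α l))

/-- `dα ∧ dα = curlWedgeCurl α • dx₀ ∧ dx₁ ∧ dx₂ ∧ dx₃`. -/
def curlWedgeCurl (α : Fin 4 → MvPolynomial (Fin 4) R) : MvPolynomial (Fin 4) R :=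
  ∑ p, ∑ j, ∑ k, ∑ l, eps p j k l • (pderiv p (α j) * pderiv k (α l))

def jacobiatorCoeff (π : Fin 4 → Fin 4 → MvPolynomial (Fin 4) R) (a b c : Fin 4) :
    MvPolynomial (Fin 4) R :=
  ∑ j, (π a j * pderiv j (π b c) + π b j * pderiv j (π c a) + π c j * pderiv j (π a b))

theorem dualCurl_swap (α : Fin 4 → MvPolynomial (Fin 4) R) (i j : Fin 4) :
    dualCurl α j i = -dualCurl α i j := by
  simp only [dualCurl, eps_swap_left i j, neg_smul, Finset.sum_neg_distrib]

theorem jacobiatorCoeff_swap_left {π : Fin 4 → Fin 4 → MvPolynomial (Fin 4) R}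
    (hanti : ∀ i j, π j i = -π i j) (a b c : Fin 4) :
    jacobiatorCoeff π b a c = -jacobiatorCoeff π a b c := by
  simp only [jacobiatorCoeff, hanti c a, hanti b c, hanti a b, map_neg, ← Finset.sum_neg_distrib]
  exact Finset.sum_congr rfl fun j _ => by ring

theorem jacobiatorCoeff_swap_right {π : Fin 4 → Fin 4 → MvPolynomial (Fin 4) R}
    (hanti : ∀ i j, π j i = -π i j) (a b c : Fin 4) :
    jacobiatorCoeff π a c b = -jacobiatorCoeff π a b c := by
  simp only [jacobiatorCoeff, hanti c a, hanti b c, hanti a b, map_neg, ← Finset.sum_neg_distrib]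
  exact Finset.sum_congr rfl fun j _ => by ring

set_option maxHeartbeats 2000000 in
theorem two_mul_jacobiatorCoeff_dualCurl (α : Fin 4 → MvPolynomial (Fin 4) R) {a b c : Fin 4}
    (hab : a < b) (hbc : b < c) :
    2 * jacobiatorCoeff (dualCurl α) a b c = ∑ d, eps a b c d • pderiv d (curlWedgeCurl α) := by
  fin_cases a <;> fin_cases b <;> fin_cases c <;>
    first
    | exact absurd hab (by decide)
    | exact absurd hbc (by decide)
    | simp only [jacobiatorCoeff, dualCurl, curlWedgeCurl, Fin.sum_univ_four, eps_eq_sign_prod]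
      simp only [Fin.isValue, Fin.coe_ofNat_eq_mod, Nat.zero_mod, CharP.cast_eq_zero, sub_self,
        Int.sign_zero, mul_zero, zero_smul, Nat.one_mod, Nat.cast_one, sub_zero, zero_lt_one,
        Int.sign_eq_one_of_pos, mul_one, add_zero, Nat.reduceMod, Nat.cast_ofNat, Order.lt_two_iff,
        zero_le_one, Nat.mod_succ, Nat.ofNat_pos, zero_sub, Int.reduceNeg, Int.neg_neg_iff_pos,
        Int.sign_eq_neg_one_of_neg, mul_neg, neg_zero, Int.reduceSub, neg_neg, one_smul, zero_add,
        neg_smul, map_add, map_neg, zero_mul, pderiv_pderiv_comm, Derivation.leibniz, smul_eq_mul,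
        neg_add_rev, smul_add, smul_neg]
      ring

variable [IsDomain R] [CharZero R]

theorem sum_pderiv_dualCurl (α : Fin 4 → MvPolynomial (Fin 4) R) (i : Fin 4) :
    ∑ j, pderiv j (dualCurl α i j) = 0 := by
  simp only [dualCurl, map_sum, map_zsmul]
  refine Finset.sum_sum_eq_zero_of_antisymm _ fun j k => ?_
  simp only [eps_swap_mid i j k, neg_smul, Finset.sum_neg_distrib, pderiv_pderiv_comm j k]

theorem sum_pderiv_integrabilityForm (α : Fin 4 → MvPolynomial (Fin 4) R) :
    ∑ p, pderiv p (integrabilityForm α p) = curlWedgeCurl α := by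
  simp only [integrabilityForm, curlWedgeCurl, map_sum, map_zsmul, pderiv_mul, smul_add,
    Finset.sum_add_distrib, add_eq_left]
  rw [Finset.sum_congr rfl fun p _ => Finset.sum_comm]
  refine Finset.sum_sum_eq_zero_of_antisymm _ fun p k => ?_
  simp only [eps_swap_first_third p, neg_smul, Finset.sum_neg_distrib, pderiv_pderiv_comm p k]

theorem jacobiatorCoeff_dualCurl_eq_zero {α : Fin 4 → MvPolynomial (Fin 4) R}
    (hint : ∀ i, integrabilityForm α i = 0) (a b c : Fin 4) :
    jacobiatorCoeff (dualCurl α) a b c = 0 := by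
  refine eq_zero_of_alternating (jacobiatorCoeff_swap_left (dualCurl_swap α))
    (jacobiatorCoeff_swap_right (dualCurl_swap α)) (fun a b c hab hbc => ?_) a b c
  have h2 := two_mul_jacobiatorCoeff_dualCurl α hab hbc
  simpa only [← sum_pderiv_integrabilityForm, hint, map_zero, Finset.sum_const_zero, smul_zero,
    mul_eq_zero, two_ne_zero, false_or] using h2

end Coordinates

section Bracket

variable {π : Fin 4 → Fin 4 → MvPolynomial (Fin 4) ℂ}

def brktDerivation (π : Fin 4 → Fin 4 → MvPolynomial (Fin 4) ℂ) (g : MvPolynomial (Fin 4) ℂ) :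
    Derivation ℂ (MvPolynomial (Fin 4) ℂ) (MvPolynomial (Fin 4) ℂ) :=
  ∑ i, (∑ j, π i j * pderiv j g) • pderiv i

def jacobiator (π : Fin 4 → Fin 4 → MvPolynomial (Fin 4) ℂ) (f g h : MvPolynomial (Fin 4) ℂ) :
    MvPolynomial (Fin 4) ℂ :=
  brkt π f (brkt π g h) + brkt π g (brkt π h f) + brkt π h (brkt π f g)

theorem brktDerivation_apply (f g : MvPolynomial (Fin 4) ℂ) :
    brktDerivation π g f = brkt π f g := by
  rw [brktDerivation, ← Derivation.coeFnAddMonoidHom_apply, map_sum, Finset.sum_apply, brkt]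
  refine Finset.sum_congr rfl fun i _ => ?_
  simp only [Derivation.coeFnAddMonoidHom_apply, Derivation.smul_apply, smul_eq_mul,
    Finset.sum_mul]
  exact Finset.sum_congr rfl fun j _ => by ring

theorem brkt_X_left (a : Fin 4) (g : MvPolynomial (Fin 4) ℂ) :
    brkt π (X a) g = ∑ j, π a j * pderiv j g := by
  simp [brkt, pderiv_X, Pi.single_apply]

theorem brkt_X_X (a b : Fin 4) : brkt π (X a) (X b) = π a b := by
  simp [brkt_X_left, pderiv_X, Pi.single_apply]

theorem brkt_neg_left (f g : MvPolynomial (Fin 4) ℂ) : brkt π (-f) g = -brkt π f g := by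
  rw [← brktDerivation_apply, map_neg, brktDerivation_apply]

theorem brkt_swap (hanti : ∀ i j, π j i = -π i j) (f g : MvPolynomial (Fin 4) ℂ) :
    brkt π g f = -brkt π f g := by
  rw [brkt, Finset.sum_comm, brkt, ← Finset.sum_neg_distrib]
  refine Finset.sum_congr rfl fun i _ => ?_
  rw [← Finset.sum_neg_distrib]
  exact Finset.sum_congr rfl fun j _ => by rw [hanti]; ring

theorem jacobiator_X (a b c : Fin 4) :
    jacobiator π (X a) (X b) (X c) = jacobiatorCoeff π a b c := by
  simp only [jacobiator, brkt_X_X]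
  simp only [jacobiatorCoeff, brkt_X_left, Finset.sum_add_distrib]

theorem jacobiator_eq_derivation_apply (hanti : ∀ i j, π j i = -π i j)
    (f g h : MvPolynomial (Fin 4) ℂ) :
    jacobiator π f g h =
      (brktDerivation π (brkt π g h) + ⁅brktDerivation π g, brktDerivation π h⁆) f := by
  rw [Derivation.add_apply, Derivation.commutator_apply]
  simp only [brktDerivation_apply, jacobiator]
  rw [brkt_swap hanti (brkt π h f) g, brkt_swap hanti f h, brkt_neg_left,
    brkt_swap hanti (brkt π f g) h]
  ring

theorem jacobiator_eq_zero (hanti : ∀ i j, π j i = -π i j)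
    (hJ : ∀ a b c, jacobiatorCoeff π a b c = 0) (f g h : MvPolynomial (Fin 4) ℂ) :
    jacobiator π f g h = 0 := by
  have of_X : ∀ g h, (∀ a, jacobiator π (X a) g h = 0) → ∀ f, jacobiator π f g h = 0 := by
    intro g h hX f
    have hD : brktDerivation π (brkt π g h) + ⁅brktDerivation π g, brktDerivation π h⁆ = 0 :=
      MvPolynomial.derivation_ext fun a => by
        rw [← jacobiator_eq_derivation_apply hanti, hX, Derivation.zero_apply]
    rw [jacobiator_eq_derivation_apply hanti, hD, Derivation.zero_apply]
  have cycle : ∀ f g h, jacobiator π f g h = jacobiator π g h f := fun f g h => by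
    simp only [jacobiator]; ring
  refine of_X g h (fun a => ?_) f
  rw [cycle]
  refine of_X h (X a) (fun b => ?_) g
  rw [cycle]
  refine of_X (X a) (X b) (fun c => ?_) h
  rw [jacobiator_X, hJ]

end Bracket

theorem stmt_14_general (α : Fin 4 → MvPolynomial (Fin 4) ℂ)
    (hint : ∀ i : Fin 4,
      ∑ j : Fin 4, ∑ k : Fin 4, ∑ l : Fin 4, eps i j k l • (α j * pderiv k (α l)) = 0)
    (π : Fin 4 → Fin 4 → MvPolynomial (Fin 4) ℂ)
    (hπ : ∀ i j, π i j = ∑ k : Fin 4, ∑ l : Fin 4, eps i j k l • pderiv k (α l)) :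
    (∀ i j, π j i = - π i j) ∧
    (∀ f g h : MvPolynomial (Fin 4) ℂ,
      brkt π f (brkt π g h) + brkt π g (brkt π h f) + brkt π h (brkt π f g) = 0) ∧
    (∀ i : Fin 4, ∑ j : Fin 4, pderiv j (π i j) = 0) := by
  obtain rfl : π = dualCurl α := funext fun i => funext fun j => hπ i j
  exact ⟨dualCurl_swap α, jacobiator_eq_zero (dualCurl_swap α)
    (jacobiatorCoeff_dualCurl_eq_zero hint), sum_pderiv_dualCurl α⟩

/-- Correspondence between integrable cubic one-forms `α = Σ αᵢ dxᵢ` (homogeneous of degree 3,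
satisfying the Euler condition and `α ∧ dα = 0`) and unimodular quadratic Poisson structures
in four dimensions: `π i j = Σ_{k,l} ε(i,j,k,l)·∂ₖα_l` is antisymmetric, its bracket satisfies
the Jacobi identity, and it is unimodular. -/
theorem stmt_14 (α : Fin 4 → MvPolynomial (Fin 4) ℂ)
    (hhom : ∀ i, (α i).IsHomogeneous 3)
    (heuler : ∑ i : Fin 4, X i * α i = 0)
    (hint : ∀ i : Fin 4,
      ∑ j : Fin 4, ∑ k : Fin 4, ∑ l : Fin 4, eps i j k l • (α j * pderiv k (α l)) = 0)
    (π : Fin 4 → Fin 4 → MvPolynomial (Fin 4) ℂ)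
    (hπ : ∀ i j, π i j = ∑ k : Fin 4, ∑ l : Fin 4, eps i j k l • pderiv k (α l)) :
    (∀ i j, π j i = - π i j) ∧
    (∀ f g h : MvPolynomial (Fin 4) ℂ,
      brkt π f (brkt π g h) + brkt π g (brkt π h f) + brkt π h (brkt π f g) = 0) ∧
    (∀ i : Fin 4, ∑ j : Fin 4, pderiv j (π i j) = 0) :=
  stmt_14_general α hint π hπ

end
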